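/- The polynomial P(x,d) = 24d^4 + 60d^3 - 120d^2 - 432d - 40d^3 x - 119d^2 x - 6dx + 432x + 43d^2 x^2 + 113d x^2 + 54x^2 - 15d x^3 - 30x^3 is nonnegative for all real x in the open interval (0, 3(d+2)/(d+5)) and all integers d >= 3. -/

import Mathlib

/-!
For `d ≥ 4`, the cubic `x ↦ P(x, d)` has negative leading coefficient and, at the right end
`X = 3(d+2)/(d+5)` of the interval, it is nonnegative, nonincreasing and convex. Expanding it in
powers of `x - X`, each term of the Taylor expansion is then nonnegative for every `x ≤ X`.
After clearing the denominators `(d+5)^k`, the three endpoint conditions become polynomials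
in `d - 4` with coefficients of a single sign.
At `d = 3` the slope at `X = 15/8` is positive and the minimum lies in the interior, so that
case is checked directly.
-/

theorem cubic_nonneg_of_le {a b c e X x : ℝ} (ha : a ≤ 0) (hx : x ≤ X)
    (hp : 0 ≤ a * X ^ 3 + b * X ^ 2 + c * X + e)
    (hp' : 3 * a * X ^ 2 + 2 * b * X + c ≤ 0)
    (hp'' : 0 ≤ 3 * a * X + b) :
    0 ≤ a * x ^ 3 + b * x ^ 2 + c * x + e := by
  have taylor : a * x ^ 3 + b * x ^ 2 + c * x + e =
      (a * X ^ 3 + b * X ^ 2 + c * X + e) + (3 * a * X ^ 2 + 2 * b * X + c) * (x - X)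
        + (x - X) ^ 2 * ((3 * a * X + b) + a * (x - X)) := by ring
  have slope_term : 0 ≤ (3 * a * X ^ 2 + 2 * b * X + c) * (x - X) :=
    mul_nonneg_of_nonpos_of_nonpos hp' (by linarith)
  have cubic_term : 0 ≤ a * (x - X) := mul_nonneg_of_nonpos_of_nonpos ha (by linarith)
  rw [taylor]
  positivity

def P (d x : ℝ) : ℝ :=
  24*d^4 + 60*d^3 - 120*d^2 - 432*d
    - 40*d^3*x - 119*d^2*x - 6*d*x + 432*x
    + 43*d^2*x^2 + 113*d*x^2 + 54*x^2 - 15*d*x^3 - 30*x^3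

lemma P_eq_cubic (d x : ℝ) :
    P d x = -15 * (d + 2) * x ^ 3 + (43*d^2 + 113*d + 54) * x ^ 2
      + (432 - 6*d - 119*d^2 - 40*d^3) * x + (24*d^4 + 60*d^3 - 120*d^2 - 432*d) := by
  unfold P
  ring

noncomputable def endpoint (d : ℝ) : ℝ := 3 * (d + 2) / (d + 5)

section FourLe

variable {d : ℝ}

lemma exists_eq_add_four (hd : 4 ≤ d) : ∃ e : ℝ, 0 ≤ e ∧ d = e + 4 :=
  ⟨d - 4, by linarith, by ring⟩

lemma P_endpoint_nonneg (hd : 4 ≤ d) : 0 ≤ P d (endpoint d) := by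
  obtain ⟨e, he, rfl⟩ := exists_eq_add_four hd
  have : P (e + 4) (endpoint (e + 4)) =
      (1662120 + 3137616*e + 2201310*e^2 + 767538*e^3 + 148821*e^4 + 16434*e^5 + 972*e^6
        + 24*e^7) / (e + 9) ^ 3 := by
    unfold P endpoint
    field_simp
    ring
  rw [this]
  positivity

lemma slope_at_endpoint_nonpos (hd : 4 ≤ d) :
    3 * (-15 * (d + 2)) * endpoint d ^ 2 + 2 * (43*d^2 + 113*d + 54) * endpoint d
      + (432 - 6*d - 119*d^2 - 40*d^3) ≤ 0 := by
  obtain ⟨e, he, rfl⟩ := exists_eq_add_four hd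
  have : 3 * (-15 * (e + 4 + 2)) * endpoint (e + 4) ^ 2
      + 2 * (43*(e + 4)^2 + 113*(e + 4) + 54) * endpoint (e + 4)
      + (432 - 6*(e + 4) - 119*(e + 4)^2 - 40*(e + 4)^3) =
      -((29160 + 94338*e + 49443*e^2 + 10693*e^3 + 1061*e^4 + 40*e^5) / (e + 9) ^ 2) := by
    unfold endpoint
    field_simp
    ring
  rw [this, neg_nonpos]
  positivity

lemma curvature_at_endpoint_nonneg (hd : 4 ≤ d) :
    0 ≤ 3 * (-15 * (d + 2)) * endpoint d + (43*d^2 + 113*d + 54) := by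
  obtain ⟨e, he, rfl⟩ := exists_eq_add_four hd
  have : 3 * (-15 * (e + 4 + 2)) * endpoint (e + 4) + (43*(e + 4)^2 + 113*(e + 4) + 54) =
      (5886 + 3687*e + 709*e^2 + 43*e^3) / (e + 9) := by
    unfold endpoint
    field_simp
    ring
  rw [this]
  positivity

lemma P_nonneg_of_four_le {x : ℝ} (hd : 4 ≤ d) (hx : x ≤ endpoint d) : 0 ≤ P d x := by
  rw [P_eq_cubic]
  refine cubic_nonneg_of_le (by linarith) hx ?_ (slope_at_endpoint_nonpos hd)
    (curvature_at_endpoint_nonneg hd)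
  rw [← P_eq_cubic]
  exact P_endpoint_nonneg hd

end FourLe

lemma P_three_nonneg {x : ℝ} (hx : x ≤ 15 / 8) : 0 ≤ P 3 x := by
  unfold P
  -- `P 3 x - 75 (15/8 - x) (x - 1)^2` is a positive definite quadratic.
  nlinarith [mul_nonneg (sub_nonneg.mpr hx) (sq_nonneg (x - 1)), sq_nonneg (x - 1)]

theorem P_nonneg_general (d : ℤ) (hd : 3 ≤ d) (x : ℝ)
    (hx1 : x < 3 * ((d:ℝ) + 2) / ((d:ℝ) + 5)) :
    0 ≤ 24*(d:ℝ)^4 + 60*(d:ℝ)^3 - 120*(d:ℝ)^2 - 432*(d:ℝ)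
      - 40*(d:ℝ)^3*x - 119*(d:ℝ)^2*x - 6*(d:ℝ)*x + 432*x
      + 43*(d:ℝ)^2*x^2 + 113*(d:ℝ)*x^2 + 54*x^2 - 15*(d:ℝ)*x^3 - 30*x^3 := by
  show 0 ≤ P d x
  rcases hd.eq_or_lt with rfl | hd_lt
  · exact_mod_cast P_three_nonneg (by norm_num at hx1; linarith)
  · have hd4 : (4 : ℝ) ≤ d := by exact_mod_cast hd_lt
    exact P_nonneg_of_four_le hd4 hx1.le

/-- The polynomial `P(x,d)` is nonnegative for `x ∈ (0, 3(d+2)/(d+5))` and integers `d ≥ 3`. -/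
theorem P_nonneg (d : ℤ) (hd : 3 ≤ d) (x : ℝ) (hx0 : 0 < x)
    (hx1 : x < 3 * ((d:ℝ) + 2) / ((d:ℝ) + 5)) :
    0 ≤ 24*(d:ℝ)^4 + 60*(d:ℝ)^3 - 120*(d:ℝ)^2 - 432*(d:ℝ)
      - 40*(d:ℝ)^3*x - 119*(d:ℝ)^2*x - 6*(d:ℝ)*x + 432*x
      + 43*(d:ℝ)^2*x^2 + 113*(d:ℝ)*x^2 + 54*x^2 - 15*(d:ℝ)*x^3 - 30*x^3 :=
  P_nonneg_general d hd x hx1
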